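/- Let q be an odd prime power, G the Heisenberg group over F_q with center Z, and for i ∈ F_q let X_i = {e} ∪ { (α, β, γ_i(α,β)) : (α,β) ≠ (0,0) } where γ_i(α,β) = αβ/2 + (α² − εβ²)i for a fixed nonsquare ε. Then in ZG: X_i·X_{-i} = q²·e + q·(G − Z), i.e., each X_i is a semiregular RDS with forbidden subgroup Z and parameters (q², q, q², q). -/

import Mathlib

/-!
`X_i` is the graph of `γ_i` over the plane `F_q²`, so the coefficient of `g = (u, v, w)` in
`X_i X_{-i}` counts the `(a, b)` with `(a, b, γ_i(a, b))⁻¹ g ∈ X_{-i}`. The terms of `γ_i`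
and `γ_{-i}` quadratic in `(a, b)` cancel in this condition, which becomes the linear equation
`(v + 4ui) a - (u + 4εvi) b = 2w - uv + 2(u² - εv²) i`. As `ε` is a nonsquare and `2 ≠ 0`,
its coefficients vanish only for `u = v = 0`: off the centre there are `q` solutions, and on the
centre the equation reads `0 = 2w`, giving `q²` solutions at `e` and none elsewhere.
-/

/-- The Heisenberg group of dimension 3 over a field `F`, with coordinates `(x, y, z)`
corresponding to the unitriangular matrix `[[1,x,z],[0,1,y],[0,0,1]]`. -/
def Heis (F : Type*) := F × F × F

namespace Heis
variable {F : Type*} [Field F]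

instance : Mul (Heis F) :=
  ⟨fun a b => (a.1 + b.1, a.2.1 + b.2.1, a.2.2 + b.2.2 + a.1 * b.2.1)⟩
instance : One (Heis F) := ⟨((0 : F), (0 : F), (0 : F))⟩
instance : Inv (Heis F) := ⟨fun a => (-a.1, -a.2.1, -a.2.2 + a.1 * a.2.1)⟩

lemma mul_def (a b : Heis F) :
    a * b = (a.1 + b.1, a.2.1 + b.2.1, a.2.2 + b.2.2 + a.1 * b.2.1) := rfl
lemma one_def : (1 : Heis F) = ((0 : F), (0 : F), (0 : F)) := rfl
lemma inv_def (a : Heis F) : a⁻¹ = (-a.1, -a.2.1, -a.2.2 + a.1 * a.2.1) := rfl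

instance : Group (Heis F) where
  mul_assoc a b c := by
    simp only [mul_def]
    exact Prod.ext (by show a.1 + b.1 + c.1 = a.1 + (b.1 + c.1); ring)
      (Prod.ext (by show a.2.1 + b.2.1 + c.2.1 = a.2.1 + (b.2.1 + c.2.1); ring)
        (by show a.2.2 + b.2.2 + a.1 * b.2.1 + c.2.2 + (a.1 + b.1) * c.2.1 =
              a.2.2 + (b.2.2 + c.2.2 + b.1 * c.2.1) + a.1 * (b.2.1 + c.2.1); ring))
  one_mul a := by
    obtain ⟨x, y, z⟩ := a
    simp only [mul_def, one_def]
    exact Prod.ext (by show 0 + x = x; simp) (Prod.ext (by show 0 + y = y; simp)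
      (by show 0 + z + 0 * y = z; simp))
  mul_one a := by
    obtain ⟨x, y, z⟩ := a
    simp only [mul_def, one_def]
    exact Prod.ext (by show x + 0 = x; simp) (Prod.ext (by show y + 0 = y; simp)
      (by show z + 0 + x * 0 = z; simp))
  inv_mul_cancel a := by
    obtain ⟨x, y, z⟩ := a
    simp only [mul_def, inv_def, one_def]
    exact Prod.ext (by show -x + x = 0; simp) (Prod.ext (by show -y + y = 0; simp)
      (by show -z + x * y + z + -x * y = 0; ring))

instance [DecidableEq F] : DecidableEq (Heis F) :=
  inferInstanceAs (DecidableEq (F × F × F))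

instance [Fintype F] : Fintype (Heis F) :=
  inferInstanceAs (Fintype (F × F × F))

end Heis

open Finset MonoidAlgebra Heis

/-- The element of the integral group ring `ℤG` given by the sum of the elements of `X`. -/
noncomputable def gsum {G : Type*} [Group G] (X : Finset G) : MonoidAlgebra ℤ G :=
  ∑ x ∈ X, MonoidAlgebra.single x (1 : ℤ)

section GroupRing
variable {G : Type*} [Group G] [DecidableEq G]

lemma gsum_coeff (X : Finset G) (g : G) :
    (gsum X).coeff g = if g ∈ X then 1 else 0 := by
  simp only [gsum, MonoidAlgebra.coeff_sum, Finsupp.finsetSum_apply,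
    MonoidAlgebra.coeff_single, Finsupp.single_apply, Finset.sum_ite_eq']

lemma gsum_mul_gsum_coeff (X Y : Finset G) (g : G) :
    (gsum X * gsum Y).coeff g = #{x ∈ X | x⁻¹ * g ∈ Y} := by
  simp only [gsum, Finset.sum_mul_sum, single_mul_single, one_mul, MonoidAlgebra.coeff_sum,
    Finsupp.finsetSum_apply, MonoidAlgebra.coeff_single, Finsupp.single_apply,
    ← eq_inv_mul_iff_mul_eq, Finset.sum_boole, Finset.filter_eq', apply_ite Finset.card,
    Finset.card_singleton, Finset.card_empty]
  push_cast
  rw [Finset.sum_boole]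

end GroupRing

section LinearEquation
variable {F : Type*} [Field F] [Fintype F] [DecidableEq F]

lemma card_filter_linear_eq_of_left_ne_zero {A : F} (B c : F) (hA : A ≠ 0) :
    #{p : F × F | A * p.1 + B * p.2 = c} = Fintype.card F := by
  rw [← Finset.card_univ]
  refine Finset.card_nbij' (·.2) (fun t => ((c - B * t) / A, t)) (by simp) ?_ ?_
    fun _ _ => rfl
  · simp [mul_div_cancel₀ _ hA]
  · rintro ⟨a, b⟩ hp
    simp only [Finset.coe_filter, Finset.mem_univ, true_and, Set.mem_ofPred_eq] at hp
    simp [← hp, hA]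

lemma card_filter_linear_eq {A B : F} (c : F) (hAB : (A, B) ≠ (0, 0)) :
    #{p : F × F | A * p.1 + B * p.2 = c} = Fintype.card F := by
  by_cases hA : A = 0
  · have hB : B ≠ 0 := by rintro rfl; exact hAB (by rw [hA])
    rw [← card_filter_linear_eq_of_left_ne_zero A c hB]
    exact Finset.card_equiv (Equiv.prodComm F F) (by simp [add_comm])
  · exact card_filter_linear_eq_of_left_ne_zero B c hA

end LinearEquation

lemma two_ne_zero_of_odd_card {F : Type*} [Field F] [Fintype F] (h : Odd (Fintype.card F)) :
    (2 : F) ≠ 0 :=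
  Ring.two_ne_zero fun hchar =>
    Nat.not_even_iff_odd.mpr h (Nat.even_iff.mpr (FiniteField.even_card_iff_char_two.mp hchar))

namespace Heis

section Graph
variable {F : Type*}

def graphMap (f : F → F → F) (p : F × F) : Heis F := (p.1, p.2, f p.1 p.2)

lemma graphMap_injective (f : F → F → F) : Function.Injective (graphMap f) :=
  fun _ _ h =>
    Prod.ext (congrArg (fun g : Heis F => g.1) h) (congrArg (fun g : Heis F => g.2.1) h)

variable [Fintype F] [DecidableEq F]

def graph (f : F → F → F) : Finset (Heis F) := univ.image (graphMap f)

lemma mem_graph {f : F → F → F} {g : Heis F} : g ∈ graph f ↔ g.2.2 = f g.1 g.2.1 := by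
  simp only [graph, Finset.mem_image, Finset.mem_univ, true_and]
  refine ⟨?_, fun h => ⟨(g.1, g.2.1), congrArg _ (congrArg _ h.symm)⟩⟩
  rintro ⟨p, rfl⟩
  rfl

lemma card_graph (f : F → F → F) : #(graph f) = Fintype.card F ^ 2 := by
  rw [graph, Finset.card_image_of_injective _ (graphMap_injective f), Finset.card_univ,
    Fintype.card_prod, sq]

end Graph

variable {F : Type*} [Field F]

lemma eq_one_iff {g : Heis F} : g = 1 ↔ g.1 = 0 ∧ g.2.1 = 0 ∧ g.2.2 = 0 := by
  obtain ⟨a, b, c⟩ := g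
  exact Prod.ext_iff.trans (and_congr_right' Prod.ext_iff)

variable [Fintype F] [DecidableEq F]

lemma insert_one_filter_eq_graph {f : F → F → F} (hf : f 0 0 = 0) :
    insert (1 : Heis F) ({g : Heis F | (g.1, g.2.1) ≠ (0, 0) ∧ g.2.2 = f g.1 g.2.1} : Finset _)
      = graph f := by
  ext g
  simp only [mem_graph, Finset.mem_insert, Finset.mem_filter, Finset.mem_univ, true_and]
  obtain ⟨a, b, c⟩ := g
  change (a, b, c) = ((0, 0, 0) : F × F × F) ∨ _ ↔ _
  by_cases hab : a = 0 ∧ b = 0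
  · obtain ⟨rfl, rfl⟩ := hab
    simp [hf]
  · simp +contextual [hab, hf]

lemma card_filter_inv_mul_mem_graph (f h : F → F → F) (g : Heis F) :
    #{x ∈ graph f | x⁻¹ * g ∈ graph h}
      = #{p : F × F | g.2.2 - f p.1 p.2 + p.1 * p.2 - p.1 * g.2.1
          = h (g.1 - p.1) (g.2.1 - p.2)} := by
  rw [show graph f = univ.image (graphMap f) from rfl, Finset.filter_image,
    Finset.card_image_of_injective _ (graphMap_injective f)]
  refine congrArg _ (Finset.filter_congr fun p _ => ?_)
  rw [mem_graph]
  change -f p.1 p.2 + p.1 * p.2 + g.2.2 + -p.1 * g.2.1 = h (-p.1 + g.1) (-p.2 + g.2.1) ↔ _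
  simp only [neg_add_eq_sub]
  constructor <;> intro H <;> linear_combination H

end Heis

section Gamma
variable {F : Type*} [Field F]

def gamma (ε i a b : F) : F := a * b / 2 + (a ^ 2 - ε * b ^ 2) * i

lemma gamma_zero_zero (ε i : F) : gamma ε i 0 0 = 0 := by
  simp [gamma]

lemma sub_gamma_eq_gamma_neg_iff (h2 : (2 : F) ≠ 0) (ε i u v w a b : F) :
    w - gamma ε i a b + a * b - a * v = gamma ε (-i) (u - a) (v - b) ↔
      (v + 4 * u * i) * a + (-u - 4 * ε * v * i) * b
        = 2 * w - u * v + 2 * (u ^ 2 - ε * v ^ 2) * i := by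
  unfold gamma
  field_simp
  constructor <;> intro H <;> linear_combination -H

lemma eq_zero_of_gamma_coeffs_eq_zero {ε : F} (hε : ∀ γ : F, γ ^ 2 ≠ ε) {i u v : F}
    (hA : v + 4 * u * i = 0) (hB : -u - 4 * ε * v * i = 0) : u = 0 ∧ v = 0 := by
  have hu : u = 0 := by
    by_contra hu
    have h16 : 1 - 16 * ε * i ^ 2 = 0 :=
      (mul_eq_zero.mp (by linear_combination -hB - 4 * ε * i * hA)).resolve_left hu
    refine hε (4 * i)⁻¹ (inv_pow (4 * i) 2 ▸ (eq_inv_of_mul_eq_one_left ?_).symm)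
    linear_combination -h16
  subst hu
  exact ⟨rfl, by linear_combination hA⟩

lemma gsum_graph_gamma_mul_coeff [Fintype F] [DecidableEq F]
    (h2 : (2 : F) ≠ 0) {ε : F} (hε : ∀ γ : F, γ ^ 2 ≠ ε) (i : F) (g : Heis F) :
    (gsum (graph (gamma ε i)) * gsum (graph (gamma ε (-i)))).coeff g =
      if g.1 = 0 ∧ g.2.1 = 0 then (if g.2.2 = 0 then (Fintype.card F : ℤ) ^ 2 else 0)
      else (Fintype.card F : ℤ) := by
  rw [gsum_mul_gsum_coeff, card_filter_inv_mul_mem_graph]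
  simp only [sub_gamma_eq_gamma_neg_iff h2]
  split_ifs with hZ hw
  · simp [hZ, hw, sq]
  · simp [hZ, hw, h2]
  · rw [card_filter_linear_eq]
    contrapose! hZ
    exact eq_zero_of_gamma_coeffs_eq_zero hε (congrArg Prod.fst hZ) (congrArg Prod.snd hZ)

end Gamma

/-- For an odd prime power `q`, a nonsquare `ε ∈ F_q` and
`X_i = {e} ∪ {(α, β, αβ/2 + (α² − εβ²)i) : (α,β) ≠ (0,0)}` in the Heisenberg group `G`
over `F_q` with center `Z`: `X_i · X_{−i} = q²·e + q·(G − Z)` in `ℤG`, i.e. each `X_i`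
is a semiregular RDS with forbidden subgroup `Z` and parameters `(q², q, q², q)`. -/
theorem stmt14 {F : Type*} [Field F] [Fintype F] [DecidableEq F]
    (q : ℕ) (hq : Fintype.card F = q) (hodd : Odd q)
    (ε : F) (hε : ∀ γ : F, γ ^ 2 ≠ ε)
    (X : F → Finset (Heis F))
    (hX : ∀ i : F, X i = insert (1 : Heis F)
      ((Finset.univ : Finset (Heis F)).filter
        (fun g => (g.1, g.2.1) ≠ (0, 0) ∧
          g.2.2 = g.1 * g.2.1 / 2 + (g.1 ^ 2 - ε * g.2.1 ^ 2) * i)))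
    (Z : Finset (Heis F))
    (hZ : Z = (Finset.univ : Finset (Heis F)).filter (fun g => g.1 = 0 ∧ g.2.1 = 0)) :
    ∀ i : F, (X i).card = q ^ 2 ∧
      gsum (X i) * gsum (X (-i)) =
        (q ^ 2) • (1 : MonoidAlgebra ℤ (Heis F)) +
          q • (gsum (Finset.univ : Finset (Heis F)) - gsum Z) := by
  have h2 : (2 : F) ≠ 0 := two_ne_zero_of_odd_card (hq ▸ hodd)
  have hXgraph (j : F) : X j = graph (gamma ε j) :=
    (hX j).trans (insert_one_filter_eq_graph (gamma_zero_zero ε j))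
  intro i
  refine ⟨by rw [hXgraph, card_graph, hq], ?_⟩
  ext g
  rw [hXgraph, hXgraph, gsum_graph_gamma_mul_coeff h2 hε, hq, hZ]
  simp only [coeff_add, coeff_smul, coeff_sub, Finsupp.add_apply, Finsupp.smul_apply,
    Finsupp.sub_apply, gsum_coeff, MonoidAlgebra.one_def, coeff_single, Finsupp.single_apply,
    Finset.mem_univ, Finset.mem_filter, true_and, if_true, eq_comm (a := (1 : Heis F)),
    eq_one_iff]
  split_ifs <;> simp_all
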